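/- arXiv:2601.01630 — 10 statements merged into one kernel-verified Lean document; each statement's English description precedes it below -/
import Mathlib

section
/- If a vector k on a finite nonempty task set T (with k i ≥ 1 for every task i) is pinwheel-schedulable, then its density satisfies ρ(k) = Σ_{i ∈ T} 1/(k i) ≤ 1. -/
/-- If a vector `k` on a finite nonempty task set `T` (with `k i ≥ 1` for
every task `i`) is pinwheel-schedulable, then its density `ρ(k) = Σ_{i ∈ T} 1/(k i)`
satisfies `ρ(k) ≤ 1`. -/
theorem density_le_one_of_schedulable {T : Type} [Fintype T] [Nonempty T]
    (k : T → ℕ) (hk : ∀ i, 1 ≤ k i)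
    (hsched : ∃ σ : ℕ → Option T,
      ∀ (i : T) (t : ℕ), ∃ s, t ≤ s ∧ s < t + k i ∧ σ s = some i) :
    ∑ i : T, (1 : ℝ) / (k i : ℝ) ≤ 1 := by
  classical
  obtain ⟨σ, hσ⟩ := hsched
  set L : ℕ := ∏ i : T, k i with hL
  have hdvd : ∀ i : T, k i ∣ L := fun i => Finset.dvd_prod_of_mem k (Finset.mem_univ i)
  have hLpos : 0 < L := Finset.prod_pos (fun i _ => hk i)
  -- fibers
  set A : T → Finset ℕ := fun i => (Finset.range L).filter (fun s => σ s = some i) with hA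
  have hcard : ∀ i : T, L / k i ≤ (A i).card := by
    intro i
    set f : ℕ → ℕ := fun j => Classical.choose (hσ i (j * k i)) with hf
    have hfspec : ∀ j, j * k i ≤ f j ∧ f j < j * k i + k i ∧ σ (f j) = some i :=
      fun j => Classical.choose_spec (hσ i (j * k i))
    have : (Finset.range (L / k i)).card ≤ (A i).card := by
      apply Finset.card_le_card_of_injOn f
      · intro j hj
        simp only [Finset.mem_coe, Finset.mem_range] at hj
        have hjk : (j + 1) * k i ≤ L := by
          have : j + 1 ≤ L / k i := hj
          calc (j + 1) * k i ≤ (L / k i) * k i := Nat.mul_le_mul_right _ this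
            _ = L := Nat.div_mul_cancel (hdvd i)
        simp only [hA, Finset.mem_coe, Finset.mem_filter, Finset.mem_range]
        have hjk' : j * k i + k i ≤ L := by rw [← Nat.succ_mul]; exact hjk
        refine ⟨?_, (hfspec j).2.2⟩
        have := (hfspec j).2.1
        omega
      · intro a _ b _ hab
        have ha := hfspec a
        have hb := hfspec b
        have hka : f a / k i = a := Nat.div_eq_of_lt_le ha.1 (by rw [Nat.succ_mul]; omega)
        have hkb : f b / k i = b := Nat.div_eq_of_lt_le hb.1 (by rw [Nat.succ_mul]; omega)
        rw [← hka, ← hkb, hab]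
    simpa using this
  have hdisj : ∀ i ∈ Finset.univ (α := T), ∀ j ∈ Finset.univ (α := T), i ≠ j →
      Disjoint (A i) (A j) := by
    intro i _ j _ hij
    refine Finset.disjoint_left.mpr ?_
    intro s hs hs'
    simp only [hA, Finset.mem_filter] at hs hs'
    exact hij (by rw [← Option.some_inj, ← hs.2, hs'.2])
  have hsum : ∑ i : T, (A i).card ≤ L := by
    rw [← Finset.card_biUnion hdisj]
    have : (Finset.univ.biUnion A) ⊆ Finset.range L := by
      intro s hs
      simp only [Finset.mem_biUnion] at hs
      obtain ⟨i, _, hi⟩ := hs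
      exact (Finset.mem_filter.mp hi).1
    simpa using Finset.card_le_card this
  have key : ∑ i : T, ((L / k i : ℕ) : ℝ) ≤ (L : ℝ) := by
    calc ∑ i : T, ((L / k i : ℕ) : ℝ) ≤ ∑ i : T, ((A i).card : ℝ) := by
          apply Finset.sum_le_sum
          intro i _
          exact_mod_cast hcard i
      _ = ((∑ i : T, (A i).card : ℕ) : ℝ) := by push_cast; ring
      _ ≤ (L : ℝ) := by exact_mod_cast hsum
  have heq : ∀ i : T, (1 : ℝ) / (k i : ℝ) = ((L / k i : ℕ) : ℝ) / (L : ℝ) := by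
    intro i
    have hki : (0 : ℝ) < (k i : ℝ) := by exact_mod_cast hk i
    have hLr : (0 : ℝ) < (L : ℝ) := by exact_mod_cast hLpos
    rw [Nat.cast_div (hdvd i) (ne_of_gt hki)]
    field_simp
  calc ∑ i : T, (1 : ℝ) / (k i : ℝ) = ∑ i : T, ((L / k i : ℕ) : ℝ) / (L : ℝ) := by
        exact Finset.sum_congr rfl (fun i _ => heq i)
    _ = (∑ i : T, ((L / k i : ℕ) : ℝ)) / (L : ℝ) := by rw [Finset.sum_div]
    _ ≤ (L : ℝ) / (L : ℝ) := by
        have hLr : (0 : ℝ) < (L : ℝ) := by exact_mod_cast hLpos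
        gcongr
    _ = 1 := div_self (by exact_mod_cast hLpos.ne')
end

section
/- Let σ be a schedule on a finite task set T that satisfies a vector k (with k i ≥ 1 for all i). Then for every t : ℕ and every L ≥ 1, the number of occurrences of each task i in the window [t, t+L) is at least ⌊L / k i⌋, and consequently Σ_{i ∈ T} ⌊L / (k i)⌋ ≤ L. -/
/-- If a schedule `σ` on a finite task set `T` satisfies a vector `k`
(with `k i ≥ 1` for all `i`), then for every `t` and every `L ≥ 1`, the number of
occurrences of each task `i` in the window `[t, t+L)` is at least `⌊L / k i⌋`, and
consequently `Σ_{i ∈ T} ⌊L / (k i)⌋ ≤ L`. -/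
theorem occurrences_lower_bound {T : Type} [Fintype T] [DecidableEq T]
    (k : T → ℕ) (hk : ∀ i, 1 ≤ k i) (σ : ℕ → Option T)
    (hσ : ∀ (i : T) (t : ℕ), ∃ s, t ≤ s ∧ s < t + k i ∧ σ s = some i)
    (t L : ℕ) (hL : 1 ≤ L) :
    (∀ i : T, L / k i ≤ ((Finset.Ico t (t + L)).filter (fun s => σ s = some i)).card) ∧
      ∑ i : T, L / k i ≤ L := by
  have key : ∀ i : T, L / k i ≤
      ((Finset.Ico t (t + L)).filter (fun s => σ s = some i)).card := by
    intro i
    set q := L / k i with hq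
    -- witness for each block
    have hw : ∀ j : ℕ, ∃ s, t + j * k i ≤ s ∧ s < t + j * k i + k i ∧ σ s = some i :=
      fun j => hσ i (t + j * k i)
    choose f hf1 hf2 hf3 using hw
    have hmem : ∀ j ∈ Finset.range q,
        f j ∈ (Finset.Ico t (t + L)).filter (fun s => σ s = some i) := by
      intro j hj
      rw [Finset.mem_range] at hj
      rw [Finset.mem_filter, Finset.mem_Ico]
      refine ⟨⟨le_trans (Nat.le_add_right _ _) (hf1 j), ?_⟩, hf3 j⟩
      have h1 : t + j * k i + k i = t + (j + 1) * k i := by ring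
      have h2 : (j + 1) * k i ≤ q * k i :=
        Nat.mul_le_mul_right _ (Nat.succ_le_of_lt hj)
      have h3 : q * k i ≤ L := Nat.div_mul_le_self L (k i)
      calc f j < t + j * k i + k i := hf2 j
        _ = t + (j + 1) * k i := h1
        _ ≤ t + q * k i := by omega
        _ ≤ t + L := by omega
    have hinj : ∀ j1 ∈ Finset.range q, ∀ j2 ∈ Finset.range q, f j1 = f j2 → j1 = j2 := by
      have mono : ∀ j1 j2 : ℕ, j1 < j2 → f j1 < f j2 := by
        intro j1 j2 h
        have : j1 * k i + k i ≤ j2 * k i := by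
          have : (j1 + 1) * k i ≤ j2 * k i :=
            Nat.mul_le_mul_right _ (Nat.succ_le_of_lt h)
          nlinarith
        have := hf2 j1
        have := hf1 j2
        omega
      intro j1 _ j2 _ h
      by_contra hne
      rcases Nat.lt_or_ge j1 j2 with hlt | hge
      · exact absurd h (Nat.ne_of_lt (mono _ _ hlt))
      · have : j2 < j1 := lt_of_le_of_ne hge (Ne.symm hne)
        exact absurd h.symm (Nat.ne_of_lt (mono _ _ this))
    calc q = (Finset.range q).card := (Finset.card_range q).symm
      _ ≤ _ := Finset.card_le_card_of_injOn f hmem hinj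
  refine ⟨key, ?_⟩
  have hsum : ∑ i : T, L / k i ≤
      ∑ i : T, ((Finset.Ico t (t + L)).filter (fun s => σ s = some i)).card :=
    Finset.sum_le_sum fun i _ => key i
  have hdisj : ((Finset.univ : Finset T) : Set T).PairwiseDisjoint
      (fun i => (Finset.Ico t (t + L)).filter (fun s => σ s = some i)) := by
    intro i _ j _ hij
    simp only [Finset.disjoint_left, Finset.mem_filter]
    rintro a ⟨_, ha⟩ ⟨_, hb⟩
    exact hij (by rw [ha] at hb; exact Option.some_inj.mp hb)
  have := Finset.card_biUnion hdisj
  have hsub : (Finset.univ : Finset T).biUnion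
      (fun i => (Finset.Ico t (t + L)).filter (fun s => σ s = some i)) ⊆
      Finset.Ico t (t + L) := by
    intro a ha
    rw [Finset.mem_biUnion] at ha
    obtain ⟨i, _, hi⟩ := ha
    exact (Finset.mem_filter.mp hi).1
  calc ∑ i : T, L / k i
      ≤ ∑ i : T, ((Finset.Ico t (t + L)).filter (fun s => σ s = some i)).card := hsum
    _ = ((Finset.univ : Finset T).biUnion
          (fun i => (Finset.Ico t (t + L)).filter (fun s => σ s = some i))).card :=
        (Finset.card_biUnion hdisj).symm
    _ ≤ (Finset.Ico t (t + L)).card := Finset.card_le_card hsub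
    _ = L := by rw [Nat.card_Ico]; omega
end

section
/- For every integer x ≥ 1, the three-task vector k = (2, 3, x) is not pinwheel-schedulable; that is, there is no schedule σ : ℕ → Option (Fin 3) such that task 0 occurs in every window of 2 consecutive slots, task 1 occurs in every window of 3 consecutive slots, and task 2 occurs in every window of x consecutive slots. -/
/-! A slot holding task 2 is flanked on both sides by task 0, which has to recur in every pair of
consecutive slots; so the window of three slots centred on it has no room for task 1. Only the
first slot may be unflanked, and the window `[1, 1 + x)` avoids it. -/

section Windows

variable {α : Type*} {σ : ℕ → α} {a : α}

lemma eq_or_eq_succ_of_window_two (h : ∀ t, ∃ s, t ≤ s ∧ s < t + 2 ∧ σ s = a) (t : ℕ) :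
    σ t = a ∨ σ (t + 1) = a := by
  obtain ⟨s, hts, hst, hs⟩ := h t
  obtain rfl | rfl : s = t ∨ s = t + 1 := by omega
  exacts [.inl hs, .inr hs]

lemma eq_or_eq_succ_or_eq_add_two_of_window_three (h : ∀ t, ∃ s, t ≤ s ∧ s < t + 3 ∧ σ s = a)
    (t : ℕ) : σ t = a ∨ σ (t + 1) = a ∨ σ (t + 2) = a := by
  obtain ⟨s, hts, hst, hs⟩ := h t
  obtain rfl | rfl | rfl : s = t ∨ s = t + 1 ∨ s = t + 2 := by omega
  exacts [.inl hs, .inr (.inl hs), .inr (.inr hs)]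

end Windows

theorem two_three_x_not_schedulable_general (x : ℕ) :
    ¬ ∃ σ : ℕ → Option (Fin 3),
        (∀ t : ℕ, ∃ s, t ≤ s ∧ s < t + 2 ∧ σ s = some 0) ∧
        (∀ t : ℕ, ∃ s, t ≤ s ∧ s < t + 3 ∧ σ s = some 1) ∧
        (∀ t : ℕ, ∃ s, t ≤ s ∧ s < t + x ∧ σ s = some 2) := by
  rintro ⟨σ, h0, h1, h2⟩
  obtain ⟨s, hs, -, hσs⟩ := h2 1
  obtain ⟨t, rfl⟩ : ∃ t, s = t + 1 := ⟨s - 1, by omega⟩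
  have before : σ t = some 0 :=
    (eq_or_eq_succ_of_window_two h0 t).resolve_right (by simp [hσs])
  have after : σ (t + 2) = some 0 :=
    (eq_or_eq_succ_of_window_two h0 (t + 1)).resolve_left (by simp [hσs])
  rcases eq_or_eq_succ_or_eq_add_two_of_window_three h1 t with h | h | h <;> simp_all

/-- For every integer `x ≥ 1`, the three-task vector `k = (2, 3, x)` is
not pinwheel-schedulable: there is no schedule `σ : ℕ → Option (Fin 3)` such that
task 0 occurs in every window of 2 consecutive slots, task 1 in every window of 3
consecutive slots, and task 2 in every window of `x` consecutive slots. -/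
theorem two_three_x_not_schedulable (x : ℕ) (hx : 1 ≤ x) :
    ¬ ∃ σ : ℕ → Option (Fin 3),
        (∀ t : ℕ, ∃ s, t ≤ s ∧ s < t + 2 ∧ σ s = some 0) ∧
        (∀ t : ℕ, ∃ s, t ≤ s ∧ s < t + 3 ∧ σ s = some 1) ∧
        (∀ t : ℕ, ∃ s, t ≤ s ∧ s < t + x ∧ σ s = some 2) :=
  two_three_x_not_schedulable_general x
end

section
/- The density bound 5/6 is the largest possible uniform schedulability threshold: for every real ε > 0 there exists a finite task set T and a vector k : T → ℕ (with k i ≥ 1 for all i) such that k is not pinwheel-schedulable and ρ(k) = Σ_{i ∈ T} 1/(k i) ≤ 5/6 + ε. -/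
/-- The density bound `5/6` is the largest possible uniform
schedulability threshold: for every real `ε > 0` there is a finite task set
(`Fin n`) and a vector `k` with `k i ≥ 1` for all `i`, such that `k` is not
pinwheel-schedulable and its density is at most `5/6 + ε`. -/
theorem five_sixths_threshold_tight :
    ∀ ε : ℝ, 0 < ε →
      ∃ (n : ℕ) (k : Fin n → ℕ),
        (∀ i, 1 ≤ k i) ∧
        (¬ ∃ σ : ℕ → Option (Fin n),
            ∀ (i : Fin n) (t : ℕ), ∃ s, t ≤ s ∧ s < t + k i ∧ σ s = some i) ∧
        ∑ i : Fin n, (1 : ℝ) / (k i : ℝ) ≤ 5 / 6 + ε := by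
  intro ε hε
  set M : ℕ := ⌈1/ε⌉₊ with hM
  have hMpos : 0 < M := Nat.ceil_pos.mpr (by positivity)
  refine ⟨3, ![2, 3, M], ?_, ?_, ?_⟩
  · intro i
    fin_cases i <;> simp [hMpos] <;> omega
  · rintro ⟨σ, hσ⟩
    -- task 2 runs at some s₀ ≥ 1
    obtain ⟨s₀, hs₀1, _, hs₀⟩ := hσ 2 1
    -- task 0 runs at s₀ - 1 and s₀ + 1
    obtain ⟨a, ha1, ha2, ha⟩ := hσ 0 (s₀ - 1)
    obtain ⟨b, hb1, hb2, hb⟩ := hσ 0 s₀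
    simp only [Matrix.cons_val_zero] at ha2 hb2
    have has : a = s₀ - 1 := by
      rcases Nat.lt_or_ge a s₀ with h | h
      · omega
      · have : a = s₀ := by omega
        rw [this, hs₀] at ha; simp at ha
    have hbs : b = s₀ + 1 := by
      rcases Nat.lt_or_ge b (s₀ + 1) with h | h
      · have : b = s₀ := by omega
        rw [this, hs₀] at hb; simp at hb
      · omega
    -- task 1 must run in window [s₀-1, s₀+2)
    obtain ⟨c, hc1, hc2, hc⟩ := hσ 1 (s₀ - 1)
    simp only [Matrix.cons_val_one, Matrix.head_cons, Matrix.cons_val_zero] at hc2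
    have : c = s₀ - 1 ∨ c = s₀ ∨ c = s₀ + 1 := by omega
    rcases this with h | h | h
    · rw [h, ← has, ha] at hc; simp at hc
    · rw [h, hs₀] at hc; simp at hc
    · rw [h, ← hbs, hb] at hc; simp at hc
  · have h1 : (1:ℝ)/ε ≤ M := Nat.le_ceil _
    have h2 : (1:ℝ)/M ≤ ε := by
      rw [div_le_iff₀ (by exact_mod_cast hMpos)]
      rw [div_le_iff₀ hε] at h1
      linarith
    simp [Fin.sum_univ_three]
    rw [one_div] at h2
    linarith
end

section
/- Insertion lemma: let T be a finite task set, p ≥ 2 an integer, and π' : ℕ → Option T a schedule. Define a schedule π : ℕ → Option (T ⊕ Unit) on the extended task set by π(t) = some (inr ()) if p divides t, and π(t) = Option.map inl (π'(t − t/p − 1)) otherwise (integer division). Then: (a) the new task inr () occurs in π exactly at the multiples of p, so it is scheduled exactly every p slots; and (b) for every task i ∈ T and every integer K with K − ⌈K/p⌉ ≥ 1, if π' schedules i in every window of K − ⌈K/p⌉ consecutive slots, then π schedules inl i in every window of K consecutive slots. -/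
/-!
Outside the multiples of `p`, the schedule `π` replays `π'` in order: for `¬ p ∣ t` the index
`t - t / p - 1` is the number of non-multiples of `p` below `t`, i.e. the rank of `t` among the
non-multiples. A window of `K` consecutive slots contains at most `⌈K / p⌉` multiples of `p`,
hence at least `K - ⌈K / p⌉` non-multiples, and these carry a whole window of `π'` of that length.
-/

namespace Nat

lemma count_add_count_not (P : ℕ → Prop) [DecidablePred P] (n : ℕ) :
    count P n + count (fun k => ¬ P k) n = n := by
  induction n with
  | zero => simp
  | succ n ih => simp only [count_succ]; split_ifs <;> omega

lemma infinite_setOf_not_dvd {p : ℕ} (hp : 2 ≤ p) : {n | ¬ p ∣ n}.Infinite :=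
  Set.infinite_of_forall_exists_gt fun a =>
    ⟨p * a + 1, fun h => by
      rw [Nat.dvd_add_right (dvd_mul_right p a), Nat.dvd_one] at h
      omega, by nlinarith⟩

variable {p : ℕ} (hp : 0 < p)
include hp

lemma count_dvd_eq_ceil (n : ℕ) : (count (p ∣ ·) n : ℤ) = ⌈(n : ℚ) / p⌉ := by
  simpa [Nat.modEq_zero_iff_dvd] using count_modEq_card_eq_ceil (b := n) hp 0

lemma count_not_dvd_of_not_dvd {n : ℕ} (hn : ¬ p ∣ n) :
    count (¬ p ∣ ·) n = n - n / p - 1 := by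
  have hdvd : count (p ∣ ·) n = n / p + 1 := by
    simpa [Nat.modEq_zero_iff_dvd, Nat.pos_of_ne_zero (mt Nat.dvd_of_mod_eq_zero hn)] using
      count_modEq_card (b := n) hp 0
  have := count_add_count_not (p ∣ ·) n
  omega

lemma count_not_dvd_add_ge (t K : ℕ) :
    (count (¬ p ∣ ·) t : ℤ) + K - ⌈(K : ℚ) / p⌉ ≤ count (¬ p ∣ ·) (t + K) := by
  have hceil : ⌈((t + K : ℕ) : ℚ) / p⌉ ≤ ⌈(t : ℚ) / p⌉ + ⌈(K : ℚ) / p⌉ := by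
    rw [Nat.cast_add, add_div]
    exact Int.ceil_add_le _ _
  have ht := count_add_count_not (p ∣ ·) t
  have htK := count_add_count_not (p ∣ ·) (t + K)
  rw [← count_dvd_eq_ceil hp, ← count_dvd_eq_ceil hp] at hceil
  omega

end Nat

theorem insertion_lemma_general {T : Type} (p : ℕ) (hp : 2 ≤ p)
    (π' : ℕ → Option T)
    (π : ℕ → Option (T ⊕ Unit))
    (hπ : ∀ t : ℕ, π t = if p ∣ t then some (Sum.inr ())
      else Option.map Sum.inl (π' (t - t / p - 1))) :
    (∀ t : ℕ, π t = some (Sum.inr ()) ↔ p ∣ t) ∧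
    (∀ (i : T) (K cK : ℕ), (cK : ℤ) = ⌈(K : ℚ) / (p : ℚ)⌉ → 1 ≤ K - cK →
      (∀ t : ℕ, ∃ s, t ≤ s ∧ s < t + (K - cK) ∧ π' s = some i) →
      (∀ t : ℕ, ∃ s, t ≤ s ∧ s < t + K ∧ π s = some (Sum.inl i))) := by
  have hp0 : 0 < p := by omega
  have hinf := Nat.infinite_setOf_not_dvd hp
  refine ⟨fun t => ?_, fun i K cK hcK hK hsched t => ?_⟩
  · rw [hπ]
    split_ifs with h <;> simp [h]
  obtain ⟨s, hts, hst, hs⟩ := hsched (Nat.count (¬ p ∣ ·) t)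
  have hwindow := Nat.count_not_dvd_add_ge hp0 t K
  have hs_not_dvd : ¬ p ∣ Nat.nth (¬ p ∣ ·) s := Nat.nth_mem_of_infinite hinf s
  refine ⟨Nat.nth (¬ p ∣ ·) s, (Nat.count_le_iff_le_nth hinf).1 hts,
    Nat.nth_lt_of_lt_count (by omega), ?_⟩
  rw [hπ, if_neg hs_not_dvd, ← Nat.count_not_dvd_of_not_dvd hp0 hs_not_dvd,
    Nat.count_nth_of_infinite hinf, hs]
  rfl

/-- Insertion lemma: let `T` be a finite task set, `p ≥ 2`, and
`π' : ℕ → Option T` a schedule.  Define `π : ℕ → Option (T ⊕ Unit)` by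
`π t = some (inr ())` if `p ∣ t` and `π t = Option.map inl (π' (t - t/p - 1))`
otherwise.  Then (a) the new task `inr ()` occurs in `π` exactly at the multiples
of `p`, and (b) for every task `i` and every `K` with `K - ⌈K/p⌉ ≥ 1`, if `π'`
schedules `i` in every window of `K - ⌈K/p⌉` consecutive slots, then `π` schedules
`inl i` in every window of `K` consecutive slots. -/
theorem insertion_lemma {T : Type} [Fintype T] (p : ℕ) (hp : 2 ≤ p)
    (π' : ℕ → Option T)
    (π : ℕ → Option (T ⊕ Unit))
    (hπ : ∀ t : ℕ, π t = if p ∣ t then some (Sum.inr ())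
      else Option.map Sum.inl (π' (t - t / p - 1))) :
    (∀ t : ℕ, π t = some (Sum.inr ()) ↔ p ∣ t) ∧
    (∀ (i : T) (K cK : ℕ), (cK : ℤ) = ⌈(K : ℚ) / (p : ℚ)⌉ → 1 ≤ K - cK →
      (∀ t : ℕ, ∃ s, t ≤ s ∧ s < t + (K - cK) ∧ π' s = some i) →
      (∀ t : ℕ, ∃ s, t ≤ s ∧ s < t + K ∧ π s = some (Sum.inl i))) :=
  insertion_lemma_general p hp π' π hπ
end

section
/- The five-task vector k = (3, 5, 8, 8, 8) is pinwheel-schedulable: there exists a schedule σ : ℕ → Option (Fin 5) in which task 0 occurs in every window of 3 consecutive slots, task 1 in every window of 5 consecutive slots, and tasks 2, 3, 4 each in every window of 8 consecutive slots. -/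
/-!
Repeating the word `0 1 2 0 1 3 0 4` with period 8 works. Since the schedule is 8-periodic,
a window starting at `t` hits task `i` as soon as the window starting at `t % 8` does, so only
finitely many windows need to be checked.
-/

theorem Function.Periodic.exists_window_of_lt {α : Type*} {σ : ℕ → α} {p k : ℕ} {P : α → Prop}
    (hσ : Function.Periodic σ p) (hp : 0 < p) (h : ∀ t < p, ∃ d < k, P (σ (t + d))) (t : ℕ) :
    ∃ s, t ≤ s ∧ s < t + k ∧ P (σ s) := by
  obtain ⟨d, hd, hP⟩ := h (t % p) (Nat.mod_lt t hp)
  refine ⟨t + d, Nat.le_add_right t d, Nat.add_lt_add_left hd t, ?_⟩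
  rwa [← hσ.map_mod_nat, ← Nat.mod_add_mod, hσ.map_mod_nat]

def schedule35888 (n : ℕ) : Option (Fin 5) :=
  [0, 1, 2, 0, 1, 3, 0, 4][n % 8]?

theorem schedule35888_periodic : Function.Periodic schedule35888 8 := fun n => by
  simp only [schedule35888, Nat.add_mod_right]

theorem schedule35888_hits_of_lt :
    ∀ i : Fin 5, ∀ t < 8, ∃ d < (![3, 5, 8, 8, 8] : Fin 5 → ℕ) i, schedule35888 (t + d) = some i := by
  decide

/-- the five-task vector `k = (3,5,8,8,8)` is pinwheel-schedulable:
there is a schedule in which task 0 occurs in every window of 3 consecutive slots,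
task 1 in every window of 5, and tasks 2, 3, 4 each in every window of 8. -/
theorem schedule_35888 :
    ∃ σ : ℕ → Option (Fin 5),
      ∀ (i : Fin 5) (t : ℕ),
        ∃ s, t ≤ s ∧ s < t + (![3, 5, 8, 8, 8] : Fin 5 → ℕ) i ∧ σ s = some i :=
  ⟨schedule35888, fun i =>
    schedule35888_periodic.exists_window_of_lt (P := (· = some i)) (by norm_num)
      (schedule35888_hits_of_lt i)⟩
end

section
/- Delay lower bound on symmetric trees: let D ≥ 1 and let N_1, …, N_D be positive integers. For each level d with 0 ≤ d < D and each level-d node v = (c_1, …, c_d) (a tuple with c_j ∈ Fin N_j), let σ_v : ℕ → Option (Fin N_{d+1}) be an arbitrary schedule of v's children. Then there exists a root-to-leaf path c_1 ∈ Fin N_1, …, c_D ∈ Fin N_D such that for every d with 1 ≤ d ≤ D, there is a time t with σ_{(c_1,…,c_{d−1})}(s) ≠ some c_d for all s with t ≤ s < t + N_d − 1; in particular, along this path the maximum inter-scheduling time of the link at level d is at least N_d for every d, so their sum is at least Σ_{d=1}^{D} N_d. -/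
/-!
Choose the path greedily from the root: a window of `N - 1` slots of a schedule can serve at
most `N - 1` of the `N` children, so at every node some child is missed throughout the window
`[0, N - 1)`, and we descend to that child.
-/

theorem Finset.exists_forall_mem_ne_some {ι α : Type*} [Fintype α] (σ : ι → Option α)
    {s : Finset ι} (hs : s.card < Fintype.card α) : ∃ c : α, ∀ i ∈ s, σ i ≠ some c := by
  classical
  by_contra! hcover
  have hsub : Finset.univ.image some ⊆ s.image σ := by
    simp only [Finset.subset_iff, Finset.mem_image, Finset.mem_univ, true_and]
    rintro _ ⟨c, rfl⟩
    exact hcover c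
  have := (Finset.card_le_card hsub).trans Finset.card_image_le
  rw [Finset.card_image_of_injective _ (Option.some_injective α), Finset.card_univ] at this
  omega

section GreedyPath

variable {α : ℕ → Type*} {P : ∀ n, ((j : Fin n) → α j) → α n → Prop}

noncomputable def greedyPath (h : ∀ n v, ∃ c, P n v c) (n : ℕ) : α n :=
  Classical.choose (h n fun j => greedyPath h j)
termination_by n
decreasing_by exact j.isLt

theorem greedyPath_spec (h : ∀ n v, ∃ c, P n v c) (n : ℕ) :
    P n (fun j => greedyPath h j) (greedyPath h n) := by
  rw [greedyPath]
  exact Classical.choose_spec _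

end GreedyPath

theorem delay_lower_bound_symmetric_tree_general
    (D : ℕ) (N : ℕ → ℕ) (hN : ∀ d, 1 ≤ N d)
    (σ : ∀ d : Fin D, ((j : Fin d.val) → Fin (N j.val)) → ℕ → Option (Fin (N d.val))) :
    ∃ c : (d : Fin D) → Fin (N d.val),
      ∀ d : Fin D, ∃ t : ℕ, ∀ s : ℕ, t ≤ s → s < t + (N d.val - 1) →
        σ d (fun j => c ⟨j.val, j.isLt.trans d.isLt⟩) s ≠ some (c d) := by
  have hmiss : ∀ d (v : (j : Fin d) → Fin (N j)), ∃ c : Fin (N d),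
      ∀ hd : d < D, ∀ s ∈ Finset.range (N d - 1), σ ⟨d, hd⟩ v s ≠ some c := by
    intro d v
    by_cases hd : d < D
    · have hcard : (Finset.range (N d - 1)).card < Fintype.card (Fin (N d)) := by
        simpa using Nat.sub_lt (hN d) one_pos
      obtain ⟨c, hc⟩ := Finset.exists_forall_mem_ne_some (σ ⟨d, hd⟩ v) hcard
      exact ⟨c, fun _ => hc⟩
    · exact ⟨⟨0, hN d⟩, fun hd' => absurd hd' hd⟩
  have hpath := greedyPath_spec (α := fun d => Fin (N d)) hmiss
  refine ⟨fun d => greedyPath (α := fun d => Fin (N d)) hmiss d, fun d => ⟨0, fun s _ hs => ?_⟩⟩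
  exact hpath d d.isLt s (Finset.mem_range.mpr (by omega))

/-- Delay lower bound on symmetric trees: let `D ≥ 1` and let
`N 0, …, N (D-1)` be positive branching numbers (0-indexed: `N d` is the number of
children of each level-`d` node, i.e. `N_{d+1}` in 1-indexed notation).  A level-`d`
node is a tuple `v : (j : Fin d) → Fin (N j)`, and `σ d v` is an arbitrary schedule
of the children of `v`.  Then there is a root-to-leaf path
`c : (d : Fin D) → Fin (N d)` such that for every level `d`, there is a time `t`
such that the child `c d` is not scheduled by its parent's schedule during the whole
window `[t, t + N d − 1)`; hence the maximum inter-scheduling time of the link at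
each level `d` is at least `N d`. -/
theorem delay_lower_bound_symmetric_tree
    (D : ℕ) (hD : 1 ≤ D) (N : ℕ → ℕ) (hN : ∀ d, 1 ≤ N d)
    (σ : ∀ d : Fin D, ((j : Fin d.val) → Fin (N j.val)) → ℕ → Option (Fin (N d.val))) :
    ∃ c : (d : Fin D) → Fin (N d.val),
      ∀ d : Fin D, ∃ t : ℕ, ∀ s : ℕ, t ≤ s → s < t + (N d.val - 1) →
        σ d (fun j => c ⟨j.val, j.isLt.trans d.isLt⟩) s ≠ some (c d) :=
  delay_lower_bound_symmetric_tree_general D N hN σ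
end

section
/- Throughput-optimal rate on symmetric trees: let D ≥ 1, let N_1, …, N_D be positive integers, and let c_1, …, c_D be positive reals (c_d is the capacity of the link from each level-d node to its parent). Then the supremum of all λ ≥ 0 for which there exists μ : {non-root nodes} → ℝ≥0 satisfying (interference) Σ_{w a child of v} μ_w ≤ 1 for every node v at a level 0 ≤ d ≤ D − 1, and (capacity) λ · Π_{d'=d+1}^{D} N_{d'} ≤ μ_v · c_d for every node v at level d with 1 ≤ d ≤ D (empty product equal to 1), is equal to min_{1 ≤ d ≤ D} c_d / Π_{d'=d}^{D} N_{d'}. Moreover this supremum is attained by the round-robin rates μ_v = 1/N_d for every level-d node v. -/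
/-- Throughput-optimal rate on symmetric trees: in the symmetric tree of
depth `D ≥ 1` with positive branching numbers (0-indexed: `N d` is the number of
children of each level-`d` node, so the level-`(d+1)` nodes per parent) and positive
link capacities (`c d` is the capacity of the link from each level-`(d+1)` node to its
parent), the set of rates `λ ≥ 0` for which there exist nonnegative activation rates
`μ` on the non-root nodes satisfying the interference constraints
(`Σ_{children w of v} μ w ≤ 1` for every node `v` at levels `0 … D−1`) and the capacity
constraints (`λ · Π_{d'>d} N d' ≤ μ v · c d` for every node `v` at level `d+1`,
`0 ≤ d < D`) has greatest element `min_d c d / Π_{d' ≥ d} N d'` (equivalently, that is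
the supremum of all such `λ` and it is attained); moreover it is attained by the
round-robin rates `μ v = 1 / N d` for each level-`(d+1)` node `v`: these satisfy the
interference and capacity constraints for that `λ`. -/
theorem throughput_optimal_rate_symmetric_tree
    (D : ℕ) (hD : 1 ≤ D) (N : ℕ → ℕ) (hN : ∀ d, 0 < N d)
    (c : ℕ → ℝ) (hc : ∀ d, 0 < c d)
    (lamStar : ℝ)
    (hlamStar : lamStar = Finset.univ.inf' ⟨⟨0, hD⟩, Finset.mem_univ _⟩
      (fun d : Fin D => c d.val / ∏ d' ∈ Finset.Ico d.val D, (N d' : ℝ))) :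
    IsGreatest
      {lam : ℝ | 0 ≤ lam ∧
        ∃ μ : (d : Fin D) → ((j : Fin (d.val + 1)) → Fin (N j.val)) → ℝ,
          (∀ (d : Fin D) (v : (j : Fin (d.val + 1)) → Fin (N j.val)), 0 ≤ μ d v) ∧
          (∀ (d : Fin D) (v : (j : Fin d.val) → Fin (N j.val)),
            ∑ a : Fin (N d.val), μ d (Fin.snoc v a) ≤ 1) ∧
          (∀ (d : Fin D) (v : (j : Fin (d.val + 1)) → Fin (N j.val)),
            lam * ∏ d' ∈ Finset.Ico (d.val + 1) D, (N d' : ℝ) ≤ μ d v * c d.val)}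
      lamStar ∧
    ((∀ d : Fin D, ∑ _a : Fin (N d.val), (1 / (N d.val : ℝ)) ≤ 1) ∧
     (∀ d : Fin D,
        lamStar * ∏ d' ∈ Finset.Ico (d.val + 1) D, (N d' : ℝ) ≤
          (1 / (N d.val : ℝ)) * c d.val)) := by
  have hNpos : ∀ d : ℕ, (0 : ℝ) < (N d : ℝ) := fun d => by exact_mod_cast hN d
  have hprod : ∀ s : Finset ℕ, (0 : ℝ) < ∏ d' ∈ s, (N d' : ℝ) := fun s =>
    Finset.prod_pos fun i _ => hNpos i
  have hsplit : ∀ d : Fin D,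
      (∏ d' ∈ Finset.Ico d.val D, (N d' : ℝ)) =
        (N d.val : ℝ) * ∏ d' ∈ Finset.Ico (d.val + 1) D, (N d' : ℝ) :=
    fun d => Finset.prod_eq_prod_Ico_succ_bot d.isLt _
  have hinterf : ∀ d : Fin D, ∑ _a : Fin (N d.val), (1 / (N d.val : ℝ)) ≤ 1 := by
    intro d
    rw [Finset.sum_const, Finset.card_univ, Fintype.card_fin, nsmul_eq_mul,
      mul_one_div, div_self (ne_of_gt (hNpos d.val))]
  have hcap : ∀ d : Fin D,
      lamStar * ∏ d' ∈ Finset.Ico (d.val + 1) D, (N d' : ℝ) ≤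
        (1 / (N d.val : ℝ)) * c d.val := by
    intro d
    have hle : lamStar ≤ c d.val / ∏ d' ∈ Finset.Ico d.val D, (N d' : ℝ) := by
      rw [hlamStar]
      exact Finset.inf'_le _ (Finset.mem_univ d)
    have h1 : (0 : ℝ) < ∏ d' ∈ Finset.Ico (d.val + 1) D, (N d' : ℝ) := hprod _
    have h2 := mul_le_mul_of_nonneg_right hle h1.le
    calc lamStar * ∏ d' ∈ Finset.Ico (d.val + 1) D, (N d' : ℝ)
        ≤ (c d.val / ∏ d' ∈ Finset.Ico d.val D, (N d' : ℝ)) *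
            ∏ d' ∈ Finset.Ico (d.val + 1) D, (N d' : ℝ) := h2
      _ = (1 / (N d.val : ℝ)) * c d.val := by
          have h3 := (hNpos d.val).ne'
          have h4 := h1.ne'
          rw [hsplit d]; field_simp
  have hlamStar_nonneg : 0 ≤ lamStar := by
    rw [hlamStar]
    exact le_of_lt ((Finset.lt_inf'_iff _).2 fun d _ => div_pos (hc d.val) (hprod _))
  refine ⟨⟨⟨hlamStar_nonneg, fun d _ => 1 / (N d.val : ℝ), ?_, ?_, ?_⟩, ?_⟩, hinterf, hcap⟩
  · intro d v; positivity
  · intro d v; exact hinterf d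
  · intro d v; exact hcap d
  · rintro lam ⟨hlam0, μ, hμ0, hμI, hμC⟩
    rw [hlamStar]
    apply Finset.le_inf'
    intro d _
    set P : ℝ := ∏ d' ∈ Finset.Ico (d.val + 1) D, (N d' : ℝ) with hP
    have hv : ∀ j : Fin d.val, Fin (N j.val) := fun j => ⟨0, hN j.val⟩
    have key : ∀ a : Fin (N d.val), lam * P / c d.val ≤ μ d (Fin.snoc hv a) :=
      fun a => (div_le_iff₀ (hc d.val)).2 (hμC d (Fin.snoc hv a))
    have hsum : (N d.val : ℝ) * (lam * P / c d.val) ≤ 1 := by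
      calc (N d.val : ℝ) * (lam * P / c d.val)
          = ∑ _a : Fin (N d.val), (lam * P / c d.val) := by
            rw [Finset.sum_const, Finset.card_univ, Fintype.card_fin, nsmul_eq_mul]
        _ ≤ ∑ a : Fin (N d.val), μ d (Fin.snoc hv a) := Finset.sum_le_sum fun a _ => key a
        _ ≤ 1 := hμI d hv
    rw [hsplit d, le_div_iff₀ (mul_pos (hNpos d.val) (hprod _))]
    calc lam * ((N d.val : ℝ) * P)
        = (N d.val : ℝ) * (lam * P / c d.val) * c d.val := by
          have h3 := (hc d.val).ne'
          field_simp
      _ ≤ 1 * c d.val := mul_le_mul_of_nonneg_right hsum (hc d.val).le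
      _ = c d.val := one_mul _
end

section
/- Greedy pruning maximizes the product (core of the Greedy Pruning optimality theorem): let D ≥ 1, let N : Fin D → ℕ with N d ≥ 1 for all d, and let B be a natural number with B ≤ Σ_d (N d − 1). Consider any sequence z^0 = N, z^1, …, z^B where each z^{t+1} is obtained from z^t by decrementing by one a coordinate d_t achieving the maximum value of z^t (i.e., z^t_{d_t} ≥ z^t_{d'} for all d'). Then for every x : Fin D → ℕ with x d ≤ N d − 1 for all d and Σ_d x d = B, one has Π_d (N d − x d) ≤ Π_d z^B_d; that is, greedily decrementing a currently largest coordinate maximizes the remaining product over all ways of distributing B decrements. -/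
/-!
Exchange argument. If `y` distributes `n + 1` decrements over `v` and `i` is a largest
coordinate of `v`, then `y` can be turned into a distribution `y'` of `n` decrements over
`v - e_i` leaving at least as large a product: take one decrement away from `i` if `y` used
it, and otherwise move one decrement from some used coordinate `j` onto `i`, which does not
decrease the product because `v j - y j < v i`. Iterating along the greedy sequence pushes
any distribution of `B` decrements onto the empty distribution over `z B`.
-/

open Finset

variable {ι : Type*}

def IsGreedyStep (v w : ι → ℕ) : Prop :=
  ∃ i, (∀ j, v j ≤ v i) ∧ w i = v i - 1 ∧ ∀ j, j ≠ i → w j = v j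

variable [Fintype ι] [DecidableEq ι]

theorem prod_le_prod_of_transfer {f g : ι → ℕ} {i j : ι} (hij : i ≠ j)
    (hi : g i + 1 = f i) (hj : g j = f j + 1) (hle : f j ≤ g i)
    (hrest : ∀ k, k ≠ i → k ≠ j → g k = f k) :
    ∏ k, f k ≤ ∏ k, g k := by
  have hj_mem : j ∈ univ.erase i := mem_erase.2 ⟨hij.symm, mem_univ j⟩
  have split : ∀ h : ι → ℕ, ∏ k, h k = h i * h j * ∏ k ∈ (univ.erase i).erase j, h k := by
    intro h
    rw [← mul_prod_erase univ h (mem_univ i), ← mul_prod_erase _ h hj_mem, mul_assoc]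
  have hrest' : ∏ k ∈ (univ.erase i).erase j, f k = ∏ k ∈ (univ.erase i).erase j, g k :=
    prod_congr rfl fun k hk => by
      simp only [mem_erase] at hk
      exact (hrest k hk.2.1 hk.1).symm
  rw [split f, split g, hrest', ← hi, hj]
  exact Nat.mul_le_mul_right _ (by nlinarith)

theorem sum_update_pred_add_one {y : ι → ℕ} {k : ι} (hk : y k ≠ 0) :
    ∑ d, Function.update y k (y k - 1) d + 1 = ∑ d, y d := by
  rw [sum_update_of_mem (mem_univ k), sdiff_singleton_eq_erase,
    ← add_sum_erase univ y (mem_univ k)]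
  omega

theorem IsGreedyStep.exists_prod_sub_le {v w y : ι → ℕ} (hvw : IsGreedyStep v w)
    (hy : ∀ d, y d ≤ v d - 1) (hsum : ∑ d, y d ≠ 0) :
    ∃ y' : ι → ℕ, (∀ d, y' d ≤ w d - 1) ∧ ∑ d, y' d + 1 = ∑ d, y d ∧
      ∏ d, (v d - y d) ≤ ∏ d, (w d - y' d) := by
  obtain ⟨i, hmax, hwi, hw⟩ := hvw
  by_cases hyi : y i = 0
  · obtain ⟨j, -, hyj⟩ := exists_ne_zero_of_sum_ne_zero hsum
    have hji : j ≠ i := fun h => hyj (h ▸ hyi)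
    refine ⟨Function.update y j (y j - 1), fun d => ?_, sum_update_pred_add_one hyj, ?_⟩
    · rcases eq_or_ne d j with rfl | hdj
      · simp only [Function.update_self, hw d hji]
        have := hy d; omega
      · rw [Function.update_of_ne hdj]
        rcases eq_or_ne d i with rfl | hdi
        · omega
        · rw [hw d hdi]; exact hy d
    · have := hy j; have := hmax j
      refine prod_le_prod_of_transfer hji.symm ?_ ?_ ?_ fun k hki hkj => ?_
      · simp only [Function.update_of_ne hji.symm, hwi, hyi]; omega
      · simp only [Function.update_self, hw j hji]; omega
      · simp only [Function.update_of_ne hji.symm, hwi, hyi]; omega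
      · simp only [Function.update_of_ne hkj, hw k hki]
  · refine ⟨Function.update y i (y i - 1), fun d => ?_, sum_update_pred_add_one hyi,
      le_of_eq (prod_congr rfl fun d _ => ?_)⟩ <;>
    · rcases eq_or_ne d i with rfl | hdi
      · simp only [Function.update_self, hwi]
        have := hy d; omega
      · simp only [Function.update_of_ne hdi, hw d hdi, hy d]

theorem prod_sub_le_prod_of_isGreedyStep (n : ℕ) (z : ℕ → ι → ℕ)
    (hz : ∀ t < n, IsGreedyStep (z t) (z (t + 1))) (y : ι → ℕ)
    (hy : ∀ d, y d ≤ z 0 d - 1) (hsum : ∑ d, y d = n) :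
    ∏ d, (z 0 d - y d) ≤ ∏ d, z n d := by
  induction n generalizing z y with
  | zero =>
    simp [(sum_eq_zero_iff.mp hsum : ∀ d ∈ univ, y d = 0)]
  | succ n ih =>
    obtain ⟨y', hy', hsum', hprod⟩ :=
      (hz 0 n.succ_pos).exists_prod_sub_le hy (by omega)
    calc ∏ d, (z 0 d - y d) ≤ ∏ d, (z 1 d - y' d) := hprod
      _ ≤ ∏ d, z (n + 1) d :=
        ih (fun t => z (t + 1)) (fun t ht => hz (t + 1) (by omega)) y' hy' (by omega)

theorem greedy_pruning_maximizes_product_general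
    (D : ℕ) (N : Fin D → ℕ)
    (B : ℕ)
    (z : ℕ → Fin D → ℕ) (hz0 : z 0 = N)
    (hstep : ∀ t < B, ∃ dt : Fin D,
      (∀ d', z t d' ≤ z t dt) ∧
      z (t + 1) dt = z t dt - 1 ∧
      ∀ d', d' ≠ dt → z (t + 1) d' = z t d')
    (x : Fin D → ℕ) (hx : ∀ d, x d ≤ N d - 1) (hxsum : ∑ d, x d = B) :
    ∏ d, (N d - x d) ≤ ∏ d, z B d := by
  subst hz0
  exact prod_sub_le_prod_of_isGreedyStep B z hstep x hx hxsum

/-- Greedy pruning maximizes the product: let `D ≥ 1`,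
`N : Fin D → ℕ` with `N d ≥ 1`, and `B ≤ Σ_d (N d − 1)`.  Let `z 0 = N` and let each
`z (t+1)` (for `t < B`) be obtained from `z t` by decrementing a coordinate of
currently maximal value.  Then for every distribution `x` of the `B` decrements
(`x d ≤ N d − 1`, `Σ_d x d = B`), the remaining product satisfies
`Π_d (N d − x d) ≤ Π_d z B d`. -/
theorem greedy_pruning_maximizes_product
    (D : ℕ) (hD : 1 ≤ D) (N : Fin D → ℕ) (hN : ∀ d, 1 ≤ N d)
    (B : ℕ) (hB : B ≤ ∑ d, (N d - 1))
    (z : ℕ → Fin D → ℕ) (hz0 : z 0 = N)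
    (hstep : ∀ t < B, ∃ dt : Fin D,
      (∀ d', z t d' ≤ z t dt) ∧
      z (t + 1) dt = z t dt - 1 ∧
      ∀ d', d' ≠ dt → z (t + 1) d' = z t d')
    (x : Fin D → ℕ) (hx : ∀ d, x d ≤ N d - 1) (hxsum : ∑ d, x d = B) :
    ∏ d, (N d - x d) ≤ ∏ d, z B d :=
  greedy_pruning_maximizes_product_general D N B z hz0 hstep x hx hxsum
end

section
/- Closed-form optimum at an access point: let N ≥ 1 and τ ≥ 1 be integers and let λ, c be positive reals with ⌊c/λ⌋ ≥ 1. Then the maximum integer s with s ≤ N such that there exists k : Fin s → ℕ with 1 ≤ k i, k i ≤ τ, and λ · k i ≤ c for all i, and k pinwheel-schedulable, equals min {N, τ, ⌊c/λ⌋}; the maximum is attained by the constant vector k i = min {τ, ⌊c/λ⌋} scheduled round-robin. -/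
/-! A flow with inter-scheduling time `k` must appear among the first `k` slots, so the flows of a
schedule whose times are all at most `K` occupy distinct slots in `[0, K)`: at most `K` flows are
admissible, and `τ` and `⌊c/λ⌋` both bound the times. Conversely, round-robin over
`m = min N τ ⌊c/λ⌋` flows serves each of them in every window of `m` slots. -/

def IsPinwheelSchedule {T : Type*} (σ : ℕ → Option T) (k : T → ℕ) : Prop :=
  ∀ (i : T) (t : ℕ), ∃ u, t ≤ u ∧ u < t + k i ∧ σ u = some i

theorem IsPinwheelSchedule.card_le {T : Type*} [Fintype T] {σ : ℕ → Option T} {k : T → ℕ}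
    (hσ : IsPinwheelSchedule σ k) {K : ℕ} (hK : ∀ i, k i ≤ K) : Fintype.card T ≤ K := by
  have slot : ∀ i, ∃ u, u < K ∧ σ u = some i := fun i ↦
    let ⟨u, _, hu, hσu⟩ := hσ i 0
    ⟨u, by have := hK i; omega, hσu⟩
  choose f hfK hσf using slot
  have hinj : Set.InjOn f (Finset.univ : Finset T) := fun a _ b _ hab ↦
    Option.some_injective _ ((hσf a).symm.trans (hab ▸ hσf b))
  simpa using
    Finset.card_le_card_of_injOn (t := Finset.range K) f (fun i _ ↦ by simpa using hfK i) hinj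

def roundRobin (m : ℕ) (hm : 0 < m) : ℕ → Option (Fin m) :=
  fun u ↦ some ⟨u % m, Nat.mod_lt u hm⟩

theorem roundRobin_isPinwheelSchedule {m : ℕ} (hm : 0 < m) {k : Fin m → ℕ}
    (hk : ∀ i, m ≤ k i) : IsPinwheelSchedule (roundRobin m hm) k := by
  intro i t
  have hi : (i : ℕ) ∈ (Finset.Ico t (t + m)).image (· % m) := by
    simp [Nat.image_Ico_mod]
  obtain ⟨u, hu, hui⟩ := Finset.mem_image.mp hi
  rw [Finset.mem_Ico] at hu
  exact ⟨u, hu.1, by have := hk i; omega, congrArg some (Fin.ext hui)⟩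

theorem mul_le_iff_le_floor_div {lam c : ℝ} (hlam : 0 < lam) {n : ℕ} (hn : n ≠ 0) :
    lam * n ≤ c ↔ n ≤ ⌊c / lam⌋₊ := by
  rw [Nat.le_floor_iff' hn, le_div_iff₀ hlam, mul_comm]

/-- Closed-form optimum at an access point: let `N ≥ 1` and `τ ≥ 1` be
integers and `λ, c` positive reals with `⌊c/λ⌋ ≥ 1`.  The maximum integer `s ≤ N` such
that there exists `k : Fin s → ℕ` with `1 ≤ k i ≤ τ` and `λ · k i ≤ c` for all `i` and
`k` pinwheel-schedulable equals `min {N, τ, ⌊c/λ⌋}`; the maximum is attained by the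
constant vector `k i = min {τ, ⌊c/λ⌋}` scheduled round-robin. -/
theorem access_point_optimum (N τ : ℕ) (hN : 1 ≤ N) (hτ : 1 ≤ τ)
    (lam c : ℝ) (hlam : 0 < lam) (hfl : 1 ≤ ⌊c / lam⌋) :
    IsGreatest
      {s : ℕ | s ≤ N ∧
        ∃ k : Fin s → ℕ,
          (∀ i, 1 ≤ k i) ∧ (∀ i, k i ≤ τ) ∧ (∀ i, lam * (k i : ℝ) ≤ c) ∧
          ∃ σ : ℕ → Option (Fin s),
            ∀ (i : Fin s) (t : ℕ), ∃ u, t ≤ u ∧ u < t + k i ∧ σ u = some i}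
      (min N (min τ (⌊c / lam⌋).toNat)) ∧
    (∀ (i : Fin (min N (min τ (⌊c / lam⌋).toNat))) (t : ℕ),
      ∃ u, t ≤ u ∧ u < t + min τ (⌊c / lam⌋).toNat ∧
        (some (⟨u % min N (min τ (⌊c / lam⌋).toNat), Nat.mod_lt u (by omega)⟩
          : Fin (min N (min τ (⌊c / lam⌋).toNat)))
          : Option (Fin (min N (min τ (⌊c / lam⌋).toNat)))) = some i) := by
  have hm : 0 < min N (min τ (⌊c / lam⌋).toNat) := by omega
  have hround : IsPinwheelSchedule (roundRobin _ hm) fun _ ↦ min τ (⌊c / lam⌋).toNat :=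
    roundRobin_isPinwheelSchedule hm fun _ ↦ by omega
  have hpos : 0 < min τ (⌊c / lam⌋).toNat := by omega
  have hcap : lam * (min τ (⌊c / lam⌋).toNat : ℕ) ≤ c := by
    rw [Int.floor_toNat] at hpos ⊢
    exact (mul_le_iff_le_floor_div hlam hpos.ne').mpr (min_le_right _ _)
  refine ⟨⟨⟨min_le_left _ _, fun _ ↦ min τ (⌊c / lam⌋).toNat, fun _ ↦ hpos,
    fun _ ↦ min_le_left _ _, fun _ ↦ hcap, _, hround⟩, ?_⟩, hround⟩
  rintro s ⟨hsN, k, hk1, hkτ, hkc, σ, hσ⟩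
  have hσ : IsPinwheelSchedule σ k := hσ
  have hsτ := hσ.card_le hkτ
  have hsfl := hσ.card_le fun i ↦
    (mul_le_iff_le_floor_div hlam (Nat.one_le_iff_ne_zero.mp (hk1 i))).mp (hkc i)
  rw [Fintype.card_fin, ← Int.floor_toNat] at hsfl
  rw [Fintype.card_fin] at hsτ
  omega
end
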